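/- If a theory T has property SOP₁′ (i.e., some formula φ(x̄,ȳ) has SOP₁′), then T has SOP₁. -/

import Mathlib

/-!
Take `ψ = φ` and `b_η = a_{h(η)}`, where `h` rewrites each digit `1` as `1` and each `0` as `10`.
For `ρ ∈ 2^ω` the codes `h(ρ↾k)` are initial segments of a single branch `σ`, and in `σ` each of
them is followed by a `1`; so SOP₁′(a) along `σ` makes `{φ(x̄, a_{h(ρ↾k)}) : k < ω}` consistent.
If `ν⌢⟨0⟩ ⊴ η` then `h(ν⌢⟨1⟩) = h(ν)⌢⟨1⟩` while `h(η)` extends `h(ν)⌢⟨1, 0⟩`, so SOP₁′(b)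
gives the inconsistency.
-/

open FirstOrder FirstOrder.Language

universe u v w

namespace Sh692

variable {L : FirstOrder.Language.{u, v}}

/-- The restriction `η↾k` of an infinite binary sequence, as a finite binary sequence. -/
def restr (η : ℕ → Fin 2) (k : ℕ) : List (Fin 2) := List.ofFn fun i : Fin k => η i

/-- `T` has SOP₁′: some formula `φ(x̄,ȳ)` with tuples `ā_η`, `η ∈ 2^{<ω}`, in a (monster)
model of `T` satisfies (a) for every `η ∈ 2^ω`, `{φ(x̄, ā_{η↾n})^{η(n)} : n < ω}` is
consistent (finitely satisfiable), where `φ¹ = φ`, `φ⁰ = ¬φ`; and (b) if `ν⌢⟨0⟩ ⊴ η`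
then `{φ(x̄, ā_η), φ(x̄, ā_ν)}` is inconsistent. -/
def HasSOP1' (T : L.Theory) : Prop :=
  ∃ (p m : ℕ) (φ : L.Formula (Fin p ⊕ Fin m)) (M : Theory.ModelType.{u, v, w} T)
    (a : List (Fin 2) → Fin m → M),
    (∀ η : ℕ → Fin 2, ∀ N : ℕ, ∃ x : Fin p → M, ∀ k < N,
      (if η k = (1 : Fin 2) then φ.Realize (Sum.elim x (a (restr η k)))
        else ¬ φ.Realize (Sum.elim x (a (restr η k))))) ∧
    (∀ ν η : List (Fin 2), ν ++ [(0 : Fin 2)] <+: η →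
      ¬ ∃ x : Fin p → M, φ.Realize (Sum.elim x (a η)) ∧ φ.Realize (Sum.elim x (a ν)))

/-- `T` has SOP₁: there are a formula `ψ(x̄,z̄)` and tuples `b̄_η`, `η ∈ 2^{<ω}`, in a
(monster) model of `T` with (a) for every `ρ ∈ 2^ω`, `{ψ(x̄, b̄_{ρ↾n}) : n < ω}` is
consistent (finitely satisfiable), and (b) if `ν⌢⟨0⟩ ⊴ η` then
`{ψ(x̄, b̄_η), ψ(x̄, b̄_{ν⌢⟨1⟩})}` is inconsistent. -/
def HasSOP1 (T : L.Theory) : Prop :=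
  ∃ (p m : ℕ) (ψ : L.Formula (Fin p ⊕ Fin m)) (M : Theory.ModelType.{u, v, w} T)
    (b : List (Fin 2) → Fin m → M),
    (∀ η : ℕ → Fin 2, ∀ N : ℕ, ∃ x : Fin p → M,
      ∀ k < N, ψ.Realize (Sum.elim x (b (restr η k)))) ∧
    (∀ ν η : List (Fin 2), ν ++ [(0 : Fin 2)] <+: η →
      ¬ ∃ x : Fin p → M,
        ψ.Realize (Sum.elim x (b η)) ∧ ψ.Realize (Sum.elim x (b (ν ++ [(1 : Fin 2)]))))

lemma restr_succ (ρ : ℕ → Fin 2) (k : ℕ) : restr ρ (k + 1) = restr ρ k ++ [ρ k] := by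
  simp only [restr, List.ofFn_succ_last, Fin.val_castSucc, Fin.val_last]

lemma restr_prefix (ρ : ℕ → Fin 2) {j k : ℕ} (h : j ≤ k) : restr ρ j <+: restr ρ k :=
  List.prefix_iff_eq_take.2 <| List.ext_getElem (by simp [restr, h]) fun _ _ _ ↦ by simp [restr]

lemma getElem_restr (ρ : ℕ → Fin 2) (k i : ℕ) (h : i < (restr ρ k).length) :
    (restr ρ k)[i] = ρ i :=
  List.getElem_ofFn h

/-- The infinite sequence of which every member of a prefix-increasing chain `s` is a restriction. -/
def prefixLimit (s : ℕ → List (Fin 2)) (n : ℕ) : Fin 2 := (s (n + 1)).getD n 0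

lemma restr_prefixLimit {s : ℕ → List (Fin 2)} (hs : ∀ {j k}, j ≤ k → s j <+: s k)
    (hlen : ∀ k, k ≤ (s k).length) (k : ℕ) : restr (prefixLimit s) (s k).length = s k := by
  refine List.ext_getElem (by simp [restr]) fun i hi hik ↦ ?_
  have hi' : i < (s (i + 1)).length := Nat.lt_of_lt_of_le (Nat.lt_succ_self i) (hlen _)
  rw [getElem_restr, prefixLimit, List.getD_eq_getElem _ _ hi']
  rcases le_total (i + 1) k with h | h
  · exact (hs h).getElem hi'
  · exact ((hs h).getElem hik).symm

def encodeDigit (i : Fin 2) : List (Fin 2) := 1 :: if i = 1 then [] else [0]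

@[simp]
lemma encodeDigit_zero : encodeDigit 0 = [1, 0] := rfl

@[simp]
lemma encodeDigit_one : encodeDigit 1 = [1] := rfl

def encode (η : List (Fin 2)) : List (Fin 2) := η.flatMap encodeDigit

@[simp]
lemma encode_nil : encode [] = [] := rfl

@[simp]
lemma encode_cons (i : Fin 2) (η : List (Fin 2)) : encode (i :: η) = encodeDigit i ++ encode η :=
  List.flatMap_cons

@[simp]
lemma encode_append (η τ : List (Fin 2)) : encode (η ++ τ) = encode η ++ encode τ :=
  List.flatMap_append

lemma encode_prefix_encode {η τ : List (Fin 2)} (h : η <+: τ) : encode η <+: encode τ := by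
  obtain ⟨t, rfl⟩ := h
  exact ⟨encode t, (encode_append η t).symm⟩

lemma length_le_length_encode (η : List (Fin 2)) : η.length ≤ (encode η).length := by
  induction η with
  | nil => simp
  | cons i η ih =>
    simp only [List.length_cons, encode_cons, List.length_append, encodeDigit]
    omega

lemma encode_restr_succ (ρ : ℕ → Fin 2) (k : ℕ) :
    encode (restr ρ (k + 1)) = encode (restr ρ k) ++ encodeDigit (ρ k) := by
  simp [restr_succ]

lemma length_encode_restr_lt (ρ : ℕ → Fin 2) {j k : ℕ} (h : j < k) :
    (encode (restr ρ j)).length < (encode (restr ρ k)).length := by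
  have := (encode_prefix_encode (restr_prefix ρ h)).length_le
  rw [encode_restr_succ, List.length_append, encodeDigit, List.length_cons] at this
  omega

def encodeBranch (ρ : ℕ → Fin 2) : ℕ → Fin 2 := prefixLimit fun k ↦ encode (restr ρ k)

lemma restr_encodeBranch (ρ : ℕ → Fin 2) (k : ℕ) :
    restr (encodeBranch ρ) (encode (restr ρ k)).length = encode (restr ρ k) :=
  restr_prefixLimit (fun h ↦ encode_prefix_encode (restr_prefix ρ h))
    (fun k ↦ by simpa [restr] using length_le_length_encode (restr ρ k)) k

lemma encodeBranch_length_encode_restr (ρ : ℕ → Fin 2) (k : ℕ) :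
    encodeBranch ρ (encode (restr ρ k)).length = 1 := by
  have hlt := length_encode_restr_lt ρ (Nat.lt_succ_self k)
  calc encodeBranch ρ (encode (restr ρ k)).length
      = (restr (encodeBranch ρ) (encode (restr ρ (k + 1))).length)[(encode (restr ρ k)).length]'
          (by simpa [restr] using hlt) := (getElem_restr _ _ _ _).symm
    _ = (encode (restr ρ (k + 1)))[(encode (restr ρ k)).length] :=
          List.getElem_of_eq (restr_encodeBranch ρ (k + 1)) _
    _ = 1 := by simp [encode_restr_succ, encodeDigit]

theorem hasSOP1_of_hasSOP1'_general (T : L.Theory) :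
    HasSOP1'.{u, v, w} T → HasSOP1.{u, v, w} T := by
  rintro ⟨p, m, φ, M, a, hcons, hincons⟩
  refine ⟨p, m, φ, M, fun η ↦ a (encode η), fun ρ N ↦ ?_, ?_⟩
  · obtain ⟨x, hx⟩ := hcons (encodeBranch ρ) (encode (restr ρ N)).length
    refine ⟨x, fun k hk ↦ ?_⟩
    simpa only [encodeBranch_length_encode_restr, restr_encodeBranch, if_pos] using
      hx _ (length_encode_restr_lt ρ hk)
  · rintro ν _ ⟨τ, rfl⟩ ⟨x, hη, hν⟩
    exact hincons (encode ν ++ [1]) _ ⟨encode τ, by simp⟩ ⟨x, hη, by simpa using hν⟩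

/-- If a theory `T` has property SOP₁′, then `T` has SOP₁. -/
theorem hasSOP1_of_hasSOP1' (T : L.Theory) (hT : T.IsComplete) :
    HasSOP1'.{u, v, w} T → HasSOP1.{u, v, w} T :=
  hasSOP1_of_hasSOP1'_general T

end Sh692
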